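/- arXiv:2401.02354 — 2 statements merged into one kernel-verified Lean document; each statement's English description precedes it below -/
import Mathlib

section
/- Let A = ι →₀ ℕ be a transitive finite-rank ℕSet algebra with Frobenius–Perron character φ. Then there exists a regular element: a vector R : ι → ℝ with R(i) > 0 for all i ∈ ι such that a ⋆ R = φ(a) • R for every a ∈ ι →₀ ℕ; and R is unique up to scaling: every nonzero r : ι → ℝ satisfying e_i ⋆ r = φ(e_i) • r for all i ∈ ι is a scalar multiple of R. -/
open Finsupp

/-- An ℕSet algebra: an associative multiplication on the free commutative monoid
`ι →₀ ℕ`, additive in each argument, with a two-sided unit. -/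
structure NSetAlgebra (ι : Type*) where
  mul : (ι →₀ ℕ) → (ι →₀ ℕ) → (ι →₀ ℕ)
  one : ι →₀ ℕ
  mul_assoc : ∀ a b c, mul (mul a b) c = mul a (mul b c)
  one_mul : ∀ a, mul one a = a
  mul_one : ∀ a, mul a one = a
  left_distrib : ∀ a b c, mul a (b + c) = mul a b + mul a c
  right_distrib : ∀ a b c, mul (a + b) c = mul a c + mul b c
  zero_mul : ∀ a, mul 0 a = 0
  mul_zero : ∀ a, mul a 0 = 0

namespace NSetAlgebra

variable {ι : Type*}

/-- The structure constants `N(i,j,k) = (e_i * e_j)(k)`. -/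
noncomputable def N (A : NSetAlgebra ι) (i j k : ι) : ℕ :=
  A.mul (Finsupp.single i 1) (Finsupp.single j 1) k

/-- Transitivity: for all simple `i, j` there are `u, v` with
`e_j ≤ e_u * e_i` and `e_j ≤ e_i * e_v`. -/
def Transitive (A : NSetAlgebra ι) : Prop :=
  ∀ i j : ι, (∃ u, Finsupp.single j 1 ≤ A.mul (Finsupp.single u 1) (Finsupp.single i 1)) ∧
             (∃ v, Finsupp.single j 1 ≤ A.mul (Finsupp.single i 1) (Finsupp.single v 1))

/-- A Frobenius–Perron character: additive, multiplicative, unital,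
and strictly positive on simple elements. -/
structure IsFPCharacter (A : NSetAlgebra ι) (φ : (ι →₀ ℕ) → ℝ) : Prop where
  map_add : ∀ a b, φ (a + b) = φ a + φ b
  map_mul : ∀ a b, φ (A.mul a b) = φ a * φ b
  map_one : φ A.one = 1
  pos : ∀ i, 0 < φ (Finsupp.single i 1)

/-- The ℝ-bilinear extension of the multiplication to vectors `ι → ℝ`:
`(r ⋆ s)(k) = ∑ i j, r i * s j * N i j k`. -/
noncomputable def starMul [Fintype ι] (A : NSetAlgebra ι) (r s : ι → ℝ) : ι → ℝ :=
  fun k => ∑ i : ι, ∑ j : ι, r i * s j * (A.N i j k : ℝ)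

/-- A fusion semiring structure: an involution `σ` such that for all simples `i, j`,
`j = σ i` iff there is a unique simple `k` with `e_k ≤ 1 ∩ (e_i * e_j)`,
iff there is a unique simple `k` with `e_k ≤ 1 ∩ (e_j * e_i)`. -/
structure IsFusionSemiring (A : NSetAlgebra ι) (σ : ι → ι) : Prop where
  involutive : ∀ i, σ (σ i) = i
  dual_iff : ∀ i j : ι,
    (∃! k, Finsupp.single k 1 ≤ A.one ∧
        Finsupp.single k 1 ≤ A.mul (Finsupp.single i 1) (Finsupp.single j 1)) ↔ j = σ i
  dual_iff' : ∀ i j : ι,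
    (∃! k, Finsupp.single k 1 ≤ A.one ∧
        Finsupp.single k 1 ≤ A.mul (Finsupp.single j 1) (Finsupp.single i 1)) ↔ j = σ i

/-- A regular element: a strictly positive vector `R` with `e_i ⋆ R = φ(e_i) • R`
for every simple `i`. -/
noncomputable def IsRegular [Fintype ι] (A : NSetAlgebra ι) (φ : (ι →₀ ℕ) → ℝ)
    (R : ι → ℝ) : Prop :=
  (∀ i, 0 < R i) ∧
  ∀ i : ι, A.starMul (fun k => ((Finsupp.single i 1 : ι →₀ ℕ) k : ℝ)) R
    = φ (Finsupp.single i 1) • R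

end NSetAlgebra

/-- The real vector underlying an element of `ι →₀ ℕ`. -/
def toRealVec {ι : Type*} (a : ι →₀ ℕ) : ι → ℝ := fun k => (a k : ℝ)

/-- The ℝ-linear extension of an additive map `(ι →₀ ℕ) → (κ →₀ ℕ)` to vectors. -/
noncomputable def linExt {ι κ : Type*} [Fintype ι]
    (f : (ι →₀ ℕ) → (κ →₀ ℕ)) (r : ι → ℝ) : κ → ℝ :=
  fun x => ∑ i : ι, r i * (f (Finsupp.single i 1) x : ℝ)

/-!
Right multiplication by `∑ j, e_j` has a strictly positive matrix (by transitivity), and `φ` is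
a positive left eigenvector of it with eigenvalue `∑ j, φ(e_j)`. A Perron–Frobenius argument then
gives a positive right eigenvector `R` spanning the whole eigenspace. Each left multiplication
`e_i ⋆ ·` commutes with right multiplications by associativity, so it maps `R` to a multiple of
`R`, and pairing with `φ` shows that the multiple is `φ(e_i)`. For uniqueness, a common
eigenvector `r` is an eigenvector of left multiplication by `∑ u, e_u`, again a positive matrix
having `R` in the same eigenspace, so `r` is proportional to `R`.
-/

namespace Matrix

variable {n : Type*} [Fintype n] {T : Matrix n n ℝ}

theorem mulVec_pos_of_pos_of_nonneg (hT : ∀ k b, 0 < T k b) {w : n → ℝ} (hw : 0 ≤ w)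
    (hw0 : w ≠ 0) (k : n) : 0 < (T *ᵥ w) k := by
  obtain ⟨b, hb⟩ := Function.ne_iff.mp hw0
  exact Finset.sum_pos' (fun c _ => mul_nonneg (hT k c).le (hw c))
    ⟨b, Finset.mem_univ b, mul_pos (hT k b) ((hw b).lt_of_ne' hb)⟩

theorem eq_smul_of_mulVec_eq_smul [Nonempty n] (hT : ∀ k b, 0 < T k b) {μ : ℝ} {R v : n → ℝ}
    (hR : ∀ k, 0 < R k) (hTR : T *ᵥ R = μ • R) (hTv : T *ᵥ v = μ • v) :
    ∃ c : ℝ, v = c • R := by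
  obtain ⟨k₀, -, hk₀⟩ := Finset.exists_min_image Finset.univ (fun k => v k / R k)
    Finset.univ_nonempty
  refine ⟨v k₀ / R k₀, ?_⟩
  set w := v - (v k₀ / R k₀) • R
  have hw : 0 ≤ w := fun k => by
    have := mul_le_mul_of_nonneg_right (hk₀ k (Finset.mem_univ k)) (hR k).le
    rw [div_mul_cancel₀ _ (hR k).ne'] at this
    simpa [w, sub_nonneg] using this
  have hTw : T *ᵥ w = μ • w := by
    rw [mulVec_sub, mulVec_smul, hTv, hTR, smul_sub, smul_comm]
  by_contra hne
  have hw0 : w ≠ 0 := sub_ne_zero.mpr hne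
  have := mulVec_pos_of_pos_of_nonneg hT hw hw0 k₀
  simp [hTw, w, div_mul_cancel₀ _ (hR k₀).ne'] at this

theorem exists_pos_mulVec_eq_smul [Nonempty n] (hT : ∀ k b, 0 < T k b) {μ : ℝ} {φ : n → ℝ}
    (hφ : ∀ k, 0 < φ k) (hφT : φ ᵥ* T = μ • φ) :
    ∃ R : n → ℝ, (∀ k, 0 < R k) ∧ T *ᵥ R = μ • R := by
  classical
  have hφ0 : φ ≠ 0 := Function.ne_iff.mpr ⟨Classical.arbitrary n, (hφ _).ne'⟩
  have hμ : 0 < μ := by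
    obtain ⟨k⟩ := ‹Nonempty n›
    have := mulVec_pos_of_pos_of_nonneg (T := Tᵀ) (fun k b => hT b k) (fun k => (hφ k).le) hφ0 k
    rw [mulVec_transpose, hφT, Pi.smul_apply, smul_eq_mul] at this
    exact pos_of_mul_pos_left this (hφ k).le
  have hdet : (T - μ • 1).det = 0 :=
    exists_vecMul_eq_zero_iff.mp
      ⟨φ, hφ0, by rw [vecMul_sub, vecMul_smul, vecMul_one, hφT, sub_self]⟩
  obtain ⟨v, hv0, hv⟩ := exists_mulVec_eq_zero_iff.mpr hdet
  rw [sub_mulVec, smul_mulVec, one_mulVec, sub_eq_zero] at hv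
  set u : n → ℝ := fun k => |v k|
  -- triangle inequality: `T |v| ≥ μ |v|`, with equality since `φ` pairs both sides equally
  have hle : ∀ k, 0 ≤ (T *ᵥ u - μ • u) k := fun k => by
    have h := Finset.abs_sum_le_sum_abs (fun b => T k b * v b) Finset.univ
    simp only [abs_mul, abs_of_pos (hT k _)] at h
    have hk := congrFun hv k
    simp only [mulVec, dotProduct, Pi.smul_apply, smul_eq_mul] at hk
    rw [hk, abs_mul, abs_of_pos hμ] at h
    simpa [u, sub_nonneg, mulVec, dotProduct] using h
  have hpair : φ ⬝ᵥ (T *ᵥ u - μ • u) = 0 := by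
    rw [dotProduct_sub, dotProduct_mulVec, hφT, dotProduct_smul, smul_dotProduct, sub_self]
  have heq : T *ᵥ u = μ • u := by
    rw [← sub_eq_zero]
    funext k
    have := (Finset.sum_eq_zero_iff_of_nonneg fun k _ => mul_nonneg (hφ k).le (hle k)).mp hpair k
      (Finset.mem_univ k)
    exact (mul_eq_zero.mp this).resolve_left (hφ k).ne'
  have hu0 : u ≠ 0 := fun h => hv0 (funext fun k => abs_eq_zero.mp (congrFun h k))
  refine ⟨u, fun k => ?_, heq⟩
  have := mulVec_pos_of_pos_of_nonneg hT (fun k => abs_nonneg (v k)) hu0 k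
  rw [heq, Pi.smul_apply, smul_eq_mul] at this
  exact pos_of_mul_pos_right this hμ.le

theorem mulVec_eq_smul_of_commute [Nonempty n] (hT : ∀ k b, 0 < T k b) {M : Matrix n n ℝ}
    (hTM : Commute T M) {μ ν : ℝ} {R φ : n → ℝ} (hR : ∀ k, 0 < R k) (hTR : T *ᵥ R = μ • R)
    (hφ : ∀ k, 0 < φ k) (hφM : φ ᵥ* M = ν • φ) : M *ᵥ R = ν • R := by
  obtain ⟨c, hc⟩ := eq_smul_of_mulVec_eq_smul hT hR hTR (v := M *ᵥ R) (by
    rw [mulVec_mulVec, hTM.eq, ← mulVec_mulVec, hTR, mulVec_smul])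
  have hφR : 0 < φ ⬝ᵥ R :=
    Finset.sum_pos (fun k _ => mul_pos (hφ k) (hR k)) Finset.univ_nonempty
  have : c * (φ ⬝ᵥ R) = ν * (φ ⬝ᵥ R) := by
    rw [← smul_eq_mul, ← dotProduct_smul, ← hc, dotProduct_mulVec, hφM, smul_dotProduct,
      smul_eq_mul]
  rw [hc, mul_right_cancel₀ hφR.ne' this]

end Matrix

open Matrix

theorem Finsupp.map_eq_sum_nsmul_single_one {ι M : Type*} [Fintype ι] [AddCommMonoid M]
    (f : (ι →₀ ℕ) →+ M) (a : ι →₀ ℕ) : f a = ∑ i, a i • f (Finsupp.single i 1) := by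
  conv_lhs => rw [← Finsupp.univ_sum_single a]
  refine (map_sum f _ _).trans (Finset.sum_congr rfl fun i _ => ?_)
  rw [← map_nsmul, Finsupp.smul_single, nsmul_one, Nat.cast_id]

namespace NSetAlgebra

variable {ι : Type*} [Fintype ι] (A : NSetAlgebra ι)

def mulLeft (x : ι →₀ ℕ) : (ι →₀ ℕ) →+ (ι →₀ ℕ) where
  toFun := A.mul x
  map_zero' := A.mul_zero x
  map_add' := A.left_distrib x

def mulRight (y : ι →₀ ℕ) : (ι →₀ ℕ) →+ (ι →₀ ℕ) where
  toFun := (A.mul · y)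
  map_zero' := A.zero_mul y
  map_add' a b := A.right_distrib a b y

theorem mul_single_one_left_apply (i : ι) (x : ι →₀ ℕ) (k : ι) :
    A.mul (Finsupp.single i 1) x k = ∑ b, x b * A.N i b k := by
  have := congrArg (· k) (Finsupp.map_eq_sum_nsmul_single_one (A.mulLeft (Finsupp.single i 1)) x)
  simpa [mulLeft, N, Finsupp.finsetSum_apply] using this

theorem mul_single_one_right_apply (x : ι →₀ ℕ) (j k : ι) :
    A.mul x (Finsupp.single j 1) k = ∑ b, x b * A.N b j k := by
  have := congrArg (· k) (Finsupp.map_eq_sum_nsmul_single_one (A.mulRight (Finsupp.single j 1)) x)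
  simpa [mulRight, N, Finsupp.finsetSum_apply] using this

theorem sum_N_mul_N (i c j k : ι) :
    ∑ b, A.N i b k * A.N c j b = ∑ b, A.N b j k * A.N i c b := by
  have hl := A.mul_single_one_left_apply i (A.mul (Finsupp.single c 1) (Finsupp.single j 1)) k
  have hr := A.mul_single_one_right_apply (A.mul (Finsupp.single i 1) (Finsupp.single c 1)) j k
  rw [A.mul_assoc] at hr
  calc ∑ b, A.N i b k * A.N c j b = ∑ b, A.N c j b * A.N i b k :=
        Finset.sum_congr rfl fun _ _ => mul_comm _ _
    _ = ∑ b, A.N b j k * A.N i c b :=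
        hl.symm.trans (hr.trans (Finset.sum_congr rfl fun _ _ => mul_comm _ _))

/-- The matrix of `x ↦ e_i ⋆ x` on `ι → ℝ`. -/
noncomputable def leftMulMatrix (i : ι) : Matrix ι ι ℝ := Matrix.of fun k b => (A.N i b k : ℝ)

/-- The matrix of `x ↦ x ⋆ e_j` on `ι → ℝ`. -/
noncomputable def rightMulMatrix (j : ι) : Matrix ι ι ℝ := Matrix.of fun k b => (A.N b j k : ℝ)

theorem commute_leftMulMatrix_rightMulMatrix (i j : ι) :
    Commute (A.leftMulMatrix i) (A.rightMulMatrix j) := by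
  ext k c
  simp only [leftMulMatrix, rightMulMatrix, Matrix.mul_apply, of_apply]
  exact_mod_cast A.sum_N_mul_N i c j k

theorem starMul_eq_sum (r s : ι → ℝ) :
    A.starMul r s = ∑ i, r i • (A.leftMulMatrix i *ᵥ s) := by
  ext k
  simp only [starMul, leftMulMatrix, mulVec, dotProduct, of_apply, Finset.sum_apply,
    Pi.smul_apply, smul_eq_mul, Finset.mul_sum]
  exact Finset.sum_congr rfl fun i _ => Finset.sum_congr rfl fun j _ => by ring

theorem starMul_single_one (i : ι) (s : ι → ℝ) :
    A.starMul (toRealVec (Finsupp.single i 1)) s = A.leftMulMatrix i *ᵥ s := by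
  classical
  simp [starMul_eq_sum, toRealVec, Finsupp.single_apply]

theorem Transitive.sum_leftMulMatrix_pos {A : NSetAlgebra ι} (hA : A.Transitive) (k b : ι) :
    0 < (∑ u, A.leftMulMatrix u) k b := by
  obtain ⟨u, hu⟩ := (hA b k).1
  rw [Matrix.sum_apply]
  exact Finset.sum_pos' (fun _ _ => Nat.cast_nonneg _) ⟨u, Finset.mem_univ u, by
    simpa [leftMulMatrix, N, pos_iff_ne_zero, Nat.one_le_iff_ne_zero] using hu k⟩

theorem Transitive.sum_rightMulMatrix_pos {A : NSetAlgebra ι} (hA : A.Transitive) (k b : ι) :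
    0 < (∑ j, A.rightMulMatrix j) k b := by
  obtain ⟨v, hv⟩ := (hA b k).2
  rw [Matrix.sum_apply]
  exact Finset.sum_pos' (fun _ _ => Nat.cast_nonneg _) ⟨v, Finset.mem_univ v, by
    simpa [rightMulMatrix, N, pos_iff_ne_zero, Nat.one_le_iff_ne_zero] using hv k⟩

noncomputable def fpdimVec (φ : (ι →₀ ℕ) → ℝ) : ι → ℝ := fun i => φ (Finsupp.single i 1)

namespace IsFPCharacter

variable {A} {φ : (ι →₀ ℕ) → ℝ}

noncomputable def toAddMonoidHom (hφ : A.IsFPCharacter φ) : (ι →₀ ℕ) →+ ℝ where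
  toFun := φ
  map_zero' := by simpa using hφ.map_add 0 0
  map_add' := hφ.map_add

theorem apply_eq_dotProduct (hφ : A.IsFPCharacter φ) (a : ι →₀ ℕ) :
    φ a = toRealVec a ⬝ᵥ fpdimVec φ := by
  have := Finsupp.map_eq_sum_nsmul_single_one hφ.toAddMonoidHom a
  simp only [toAddMonoidHom, AddMonoidHom.coe_mk, ZeroHom.coe_mk, nsmul_eq_mul] at this
  exact this

theorem fpdimVec_vecMul_leftMulMatrix (hφ : A.IsFPCharacter φ) (i : ι) :
    fpdimVec φ ᵥ* A.leftMulMatrix i = fpdimVec φ i • fpdimVec φ := by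
  ext b
  have := hφ.apply_eq_dotProduct (A.mul (Finsupp.single i 1) (Finsupp.single b 1))
  rw [hφ.map_mul] at this
  change _ = φ (Finsupp.single i 1) * φ (Finsupp.single b 1)
  rw [this]
  exact Finset.sum_congr rfl fun k _ => mul_comm _ _

theorem fpdimVec_vecMul_rightMulMatrix (hφ : A.IsFPCharacter φ) (j : ι) :
    fpdimVec φ ᵥ* A.rightMulMatrix j = fpdimVec φ j • fpdimVec φ := by
  ext b
  have := hφ.apply_eq_dotProduct (A.mul (Finsupp.single b 1) (Finsupp.single j 1))
  rw [hφ.map_mul, mul_comm] at this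
  change _ = φ (Finsupp.single j 1) * φ (Finsupp.single b 1)
  rw [this]
  exact Finset.sum_congr rfl fun k _ => mul_comm _ _

end IsFPCharacter
end NSetAlgebra

open NSetAlgebra in
/-- Existence and uniqueness up to scaling of the regular element: there is a strictly
positive `R` with `a ⋆ R = φ(a) • R` for all `a`, and any nonzero `r` with
`e_i ⋆ r = φ(e_i) • r` for all `i` is a scalar multiple of `R`. -/
theorem stmt9 {ι : Type*} [Fintype ι] [Nonempty ι]
    (A : NSetAlgebra ι) (hA : A.Transitive)
    (φ : (ι →₀ ℕ) → ℝ) (hφ : A.IsFPCharacter φ) :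
    ∃ R : ι → ℝ, (∀ i, 0 < R i) ∧
      (∀ a : ι →₀ ℕ, A.starMul (toRealVec a) R = φ a • R) ∧
      (∀ r : ι → ℝ, r ≠ 0 →
        (∀ i : ι, A.starMul (toRealVec (Finsupp.single i 1)) r
          = φ (Finsupp.single i 1) • r) →
        ∃ c : ℝ, r = c • R) := by
  have hd : ∀ i, 0 < fpdimVec φ i := hφ.pos
  have hd_right :
      fpdimVec φ ᵥ* ∑ j, A.rightMulMatrix j = (∑ j, fpdimVec φ j) • fpdimVec φ := by
    simp only [vecMul_sum, hφ.fpdimVec_vecMul_rightMulMatrix, Finset.sum_smul]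
  obtain ⟨R, hR, hRR⟩ := exists_pos_mulVec_eq_smul hA.sum_rightMulMatrix_pos hd hd_right
  -- `R` spans the eigenline of `· ⋆ ∑ j, e_j`, which every `e_i ⋆ ·` preserves
  have hLR : ∀ i, A.leftMulMatrix i *ᵥ R = fpdimVec φ i • R := fun i =>
    mulVec_eq_smul_of_commute hA.sum_rightMulMatrix_pos
      (Commute.sum_left _ _ _ fun j _ => (A.commute_leftMulMatrix_rightMulMatrix i j).symm)
      hR hRR hd (hφ.fpdimVec_vecMul_leftMulMatrix i)
  have hsum_left : ∀ v : ι → ℝ, (∀ i, A.leftMulMatrix i *ᵥ v = fpdimVec φ i • v) →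
      (∑ u, A.leftMulMatrix u) *ᵥ v = (∑ u, fpdimVec φ u) • v := fun v hv => by
    simp only [sum_mulVec, hv, Finset.sum_smul]
  refine ⟨R, hR, fun a => ?_, fun r _ hr => ?_⟩
  · simp only [starMul_eq_sum, hLR, smul_smul, ← Finset.sum_smul, hφ.apply_eq_dotProduct a]
    rfl
  · have hLr : ∀ i, A.leftMulMatrix i *ᵥ r = fpdimVec φ i • r := fun i => by
      rw [← starMul_single_one]; exact hr i
    exact eq_smul_of_mulVec_eq_smul hA.sum_leftMulMatrix_pos hR (hsum_left R hLR)
      (hsum_left r hLr)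
end

section
/- Let A = ι →₀ ℕ and B = κ →₀ ℕ be transitive finite-rank ℕSet algebras with Frobenius–Perron characters φ_A and φ_B, and let f : (ι →₀ ℕ) → (κ →₀ ℕ) be a morphism of ℕSet algebras, i.e., f is additive, multiplicative (f(a * b) = f(a) * f(b)) and unital (f(1) = 1). Then: (1) f preserves Frobenius–Perron dimensions: φ_B(f(a)) = φ_A(a) for all a ∈ ι →₀ ℕ; and (2) if f is dominant (for every x ∈ κ there exists a ∈ ι →₀ ℕ with e_x ≤ f(a)), then for any regular elements R_A of A and R_B of B, the ℝ-linear extension f_ℝ of f satisfies f_ℝ(R_A) = (φ̂_A(R_A)/φ̂_B(R_B)) • R_B. -/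
open Finsupp

/-!
Both claims come from the uniqueness half of Perron–Frobenius: two positive eigenvectors of a
matrix with positive entries are proportional. For (1), `φ_B ∘ f` is a character of `A`,
nonnegative on simples and hence positive by transitivity; the dimension vectors
`(φ_A(e_i))_i` and `(φ_B(f(e_i)))_i` are both positive left eigenvectors of multiplication by
`s = ∑ e_i`, whose matrix is positive by transitivity, and evaluating at `1` makes the scalar `1`.
For (2), `f_ℝ(R_A)` and `R_B` are positive eigenvectors of multiplication by `f(s)` in `B`,
whose matrix is positive because dominance gives `f(s)` full support; pairing with the
dimension vector of `B` computes the scalar.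
-/

open scoped Matrix

theorem exists_mul_le_and_eq_of_pos {n : Type*} [Fintype n] [Nonempty n] {v w : n → ℝ}
    (hw : ∀ i, 0 < w i) : ∃ t i₀, (∀ j, t * w j ≤ v j) ∧ v i₀ = t * w i₀ := by
  obtain ⟨i₀, -, hmin⟩ := Finset.univ.exists_min_image (fun i => v i / w i) Finset.univ_nonempty
  refine ⟨v i₀ / w i₀, i₀, fun j => ?_, (div_mul_cancel₀ _ (hw i₀).ne').symm⟩
  exact (le_div_iff₀ (hw j)).mp (hmin j (Finset.mem_univ j))

namespace Matrix

variable {n : Type*} [Fintype n] [Nonempty n] {M : Matrix n n ℝ} {v w : n → ℝ} {c d : ℝ}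

theorem eigenvalue_le_of_mulVec_eq_smul (hM : ∀ i j, 0 ≤ M i j) (hv : ∀ i, 0 < v i)
    (hw : ∀ i, 0 < w i) (hMv : M *ᵥ v = c • v) (hMw : M *ᵥ w = d • w) : d ≤ c := by
  obtain ⟨t, i₀, hle, heq⟩ := exists_mul_le_and_eq_of_pos (v := v) hw
  have hMle : t * (M *ᵥ w) i₀ ≤ (M *ᵥ v) i₀ := by
    simp only [mulVec, dotProduct, Finset.mul_sum]
    exact Finset.sum_le_sum fun j _ => by
      rw [mul_left_comm]; exact mul_le_mul_of_nonneg_left (hle j) (hM i₀ j)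
  rw [hMv, hMw, Pi.smul_apply, Pi.smul_apply, smul_eq_mul, smul_eq_mul, mul_left_comm, ← heq]
    at hMle
  exact le_of_mul_le_mul_right hMle (hv i₀)

theorem exists_eq_smul_of_mulVec_eq_smul (hM : ∀ i j, 0 < M i j) (hv : ∀ i, 0 < v i)
    (hw : ∀ i, 0 < w i) (hMv : M *ᵥ v = c • v) (hMw : M *ᵥ w = d • w) :
    ∃ t : ℝ, v = t • w := by
  have hM' : ∀ i j, 0 ≤ M i j := fun i j => (hM i j).le
  have hcd : c = d := le_antisymm (eigenvalue_le_of_mulVec_eq_smul hM' hw hv hMw hMv)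
    (eigenvalue_le_of_mulVec_eq_smul hM' hv hw hMv hMw)
  obtain ⟨t, i₀, hle, heq⟩ := exists_mul_le_and_eq_of_pos (v := v) hw
  refine ⟨t, funext fun j => ?_⟩
  -- `v - t • w` is a nonnegative `c`-eigenvector vanishing at `i₀`; positivity of `M` kills it
  have hMu : M *ᵥ (v - t • w) = c • (v - t • w) := by
    rw [mulVec_sub, mulVec_smul, hMv, hMw, hcd, smul_sub, smul_comm]
  have hzero : ∑ k, M i₀ k * (v k - t * w k) = 0 := by
    simpa [mulVec, dotProduct, heq] using congrFun hMu i₀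
  have hj := (Finset.sum_eq_zero_iff_of_nonneg fun k _ =>
    mul_nonneg (hM' i₀ k) (sub_nonneg.mpr (hle k))).mp hzero j (Finset.mem_univ j)
  rw [Pi.smul_apply, smul_eq_mul]
  linarith [(mul_eq_zero.mp hj).resolve_left (hM i₀ j).ne']

end Matrix

section Additive

variable {ι : Type*} [Fintype ι]

theorem eq_sum_smul_of_map_add {M : Type*} [AddCommMonoid M] [IsLeftCancelAdd M]
    (g : (ι →₀ ℕ) → M) (hg : ∀ a b, g (a + b) = g a + g b) (a : ι →₀ ℕ) :
    g a = ∑ k, a k • g (single k 1) := by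
  let G : (ι →₀ ℕ) →+ M :=
    { toFun := g
      map_zero' := (left_eq_add (a := g 0)).mp (by rw [← hg, add_zero])
      map_add' := hg }
  conv_lhs => rw [← univ_sum_single a]
  simp_rw [← smul_single_one _ (a _)]
  exact map_sum G _ _ |>.trans (Finset.sum_congr rfl fun k _ => map_nsmul G _ _)

theorem eq_sum_mul_of_map_add (φ : (ι →₀ ℕ) → ℝ) (hφ : ∀ a b, φ (a + b) = φ a + φ b)
    (a : ι →₀ ℕ) : φ a = ∑ k, (a k : ℝ) * φ (single k 1) := by
  simp only [eq_sum_smul_of_map_add φ hφ a, nsmul_eq_mul]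

theorem nonneg_of_map_add (φ : (ι →₀ ℕ) → ℝ) (hφ : ∀ a b, φ (a + b) = φ a + φ b)
    (hnonneg : ∀ i, 0 ≤ φ (single i 1)) (a : ι →₀ ℕ) : 0 ≤ φ a := by
  rw [eq_sum_mul_of_map_add φ hφ]
  exact Finset.sum_nonneg fun k _ => mul_nonneg (Nat.cast_nonneg _) (hnonneg k)

theorem apply_eq_sum_of_map_add {κ : Type*} (f : (ι →₀ ℕ) → (κ →₀ ℕ))
    (hf : ∀ a b, f (a + b) = f a + f b) (a : ι →₀ ℕ) (x : κ) :
    f a x = ∑ k, a k * f (single k 1) x := by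
  simp only [eq_sum_smul_of_map_add f hf a, finsetSum_apply, Finsupp.smul_apply, smul_eq_mul]

end Additive

namespace NSetAlgebra

section mulMatrix

variable {ι : Type*} (A : NSetAlgebra ι)

noncomputable def mulMatrix (b : ι →₀ ℕ) : Matrix ι ι ℝ :=
  Matrix.of fun k j => (A.mul b (single j 1) k : ℝ)

theorem mulMatrix_add (b c : ι →₀ ℕ) :
    A.mulMatrix (b + c) = A.mulMatrix b + A.mulMatrix c := by
  ext k j
  simp [mulMatrix, A.right_distrib]

theorem mul_le_mul_right {a b : ι →₀ ℕ} (h : a ≤ b) (c : ι →₀ ℕ) : A.mul a c ≤ A.mul b c := by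
  obtain ⟨d, rfl⟩ := exists_add_of_le h
  rw [A.right_distrib]
  exact le_self_add

theorem mulMatrix_pos (hA : A.Transitive) {b : ι →₀ ℕ} (hb : ∀ x, 0 < b x) (k j : ι) :
    0 < A.mulMatrix b k j := by
  obtain ⟨u, hu⟩ := (hA j k).1
  have hub : single u 1 ≤ b := single_le_iff.mpr (hb u)
  have := single_le_iff.mp (hu.trans (A.mul_le_mul_right hub _))
  simp only [mulMatrix, Matrix.of_apply, Nat.cast_pos]
  omega

theorem starMul_single_left [Fintype ι] (i : ι) (R : ι → ℝ) :
    A.starMul (fun k => ((single i 1 : ι →₀ ℕ) k : ℝ)) R = A.mulMatrix (single i 1) *ᵥ R := by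
  classical
  ext k
  simp [starMul, mulMatrix, Matrix.mulVec, dotProduct, Finsupp.single_apply, N, mul_comm]

end mulMatrix

variable {ι : Type*} [Fintype ι] {A : NSetAlgebra ι}

theorem isFPCharacter_of_nonneg (hA : A.Transitive) {ψ : (ι →₀ ℕ) → ℝ}
    (hadd : ∀ a b, ψ (a + b) = ψ a + ψ b) (hmul : ∀ a b, ψ (A.mul a b) = ψ a * ψ b)
    (hone : ψ A.one = 1) (hnonneg : ∀ i, 0 ≤ ψ (single i 1)) : A.IsFPCharacter ψ := by
  have hmono : ∀ {a b}, a ≤ b → ψ a ≤ ψ b := by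
    intro a b hab
    obtain ⟨d, rfl⟩ := exists_add_of_le hab
    rw [hadd]
    exact le_add_of_nonneg_right (nonneg_of_map_add ψ hadd hnonneg d)
  refine ⟨hadd, hmul, hone, fun k => (hnonneg k).lt_of_ne' fun hk => ?_⟩
  -- if `ψ e_k = 0`, then `ψ e_j ≤ ψ (e_k * e_v) = 0` for every `j`, so `ψ 1 = 0`
  have hzero : ∀ j, ψ (single j 1) = 0 := fun j => by
    obtain ⟨v, hv⟩ := (hA k j).2
    exact le_antisymm (by simpa [hmul, hk] using hmono hv) (hnonneg j)
  simp [eq_sum_mul_of_map_add ψ hadd A.one, hzero] at hone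

namespace IsFPCharacter

variable {φ : (ι →₀ ℕ) → ℝ}

theorem vecMul_mulMatrix (hφ : A.IsFPCharacter φ) (b : ι →₀ ℕ) :
    (fun k => φ (single k 1)) ᵥ* A.mulMatrix b = φ b • fun k => φ (single k 1) := by
  ext j
  rw [Pi.smul_apply, smul_eq_mul, ← hφ.map_mul, eq_sum_mul_of_map_add φ hφ.map_add]
  simp only [Matrix.vecMul, dotProduct, mulMatrix, Matrix.of_apply, mul_comm]

theorem unique [Nonempty ι] (hA : A.Transitive) {ψ : (ι →₀ ℕ) → ℝ} (hφ : A.IsFPCharacter φ)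
    (hψ : A.IsFPCharacter ψ) : φ = ψ := by
  have hpos : ∀ k j, 0 < (A.mulMatrix (∑ i, single i 1))ᵀ k j := fun k j =>
    A.mulMatrix_pos hA (fun x => by simp [finsetSum_apply]) j k
  obtain ⟨t, ht⟩ := Matrix.exists_eq_smul_of_mulVec_eq_smul hpos hφ.pos hψ.pos
    (by rw [Matrix.mulVec_transpose, hφ.vecMul_mulMatrix])
    (by rw [Matrix.mulVec_transpose, hψ.vecMul_mulMatrix])
  have hdim : ∀ k, φ (single k 1) = t * ψ (single k 1) := fun k => congrFun ht k
  have ht1 : t = 1 := calc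
    t = t * ψ A.one := by rw [hψ.map_one]; ring
    _ = φ A.one := by
      rw [eq_sum_mul_of_map_add ψ hψ.map_add, eq_sum_mul_of_map_add φ hφ.map_add, Finset.mul_sum]
      exact Finset.sum_congr rfl fun k _ => by rw [hdim]; ring
    _ = 1 := hφ.map_one
  funext a
  simp [eq_sum_mul_of_map_add φ hφ.map_add a, eq_sum_mul_of_map_add ψ hψ.map_add a, hdim, ht1]

end IsFPCharacter

theorem IsRegular.mulMatrix_mulVec {φ : (ι →₀ ℕ) → ℝ} {R : ι → ℝ} (hR : A.IsRegular φ R)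
    (hadd : ∀ a b, φ (a + b) = φ a + φ b) (b : ι →₀ ℕ) : A.mulMatrix b *ᵥ R = φ b • R := by
  rw [eq_sum_smul_of_map_add (fun b => A.mulMatrix b *ᵥ R)
      (fun b c => by simp only [mulMatrix_add, Matrix.add_mulVec]) b,
    eq_sum_mul_of_map_add φ hadd b, Finset.sum_smul]
  refine Finset.sum_congr rfl fun k _ => ?_
  rw [← starMul_single_left, hR.2 k, mul_smul, Nat.cast_smul_eq_nsmul]

end NSetAlgebra

section Morphism

variable {ι κ : Type*} {f : (ι →₀ ℕ) → (κ →₀ ℕ)}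

noncomputable def linExtMatrix (f : (ι →₀ ℕ) → (κ →₀ ℕ)) : Matrix κ ι ℝ :=
  Matrix.of fun x i => (f (single i 1) x : ℝ)

theorem linExt_eq_mulVec [Fintype ι] (r : ι → ℝ) : linExt f r = linExtMatrix f *ᵥ r := by
  ext x
  simp [linExt, linExtMatrix, Matrix.mulVec, dotProduct, mul_comm]

theorem vecMul_linExtMatrix [Fintype κ] {φ : (κ →₀ ℕ) → ℝ}
    (hφ : ∀ a b, φ (a + b) = φ a + φ b) :
    (fun x => φ (single x 1)) ᵥ* linExtMatrix f = fun i => φ (f (single i 1)) := by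
  ext i
  simp [Matrix.vecMul, dotProduct, linExtMatrix, eq_sum_mul_of_map_add φ hφ (f _), mul_comm]

theorem mulMatrix_mul_linExtMatrix [Fintype ι] [Fintype κ] {A : NSetAlgebra ι}
    {B : NSetAlgebra κ} (hadd : ∀ a b, f (a + b) = f a + f b)
    (hmul : ∀ a b, f (A.mul a b) = B.mul (f a) (f b)) (a : ι →₀ ℕ) :
    B.mulMatrix (f a) * linExtMatrix f = linExtMatrix f * A.mulMatrix a := by
  ext x i
  have hB := apply_eq_sum_of_map_add (B.mul (f a)) (B.left_distrib _) (f (single i 1)) x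
  have hf := apply_eq_sum_of_map_add f hadd (A.mul a (single i 1)) x
  rw [hmul] at hf
  have key : ∑ y, B.mul (f a) (single y 1) x * f (single i 1) y
      = ∑ k, f (single k 1) x * A.mul a (single i 1) k := by
    rw [Finset.sum_congr rfl fun _ _ => mul_comm _ _, ← hB, hf]
    exact Finset.sum_congr rfl fun _ _ => mul_comm _ _
  simp only [Matrix.mul_apply, NSetAlgebra.mulMatrix, linExtMatrix, Matrix.of_apply]
  exact_mod_cast key

theorem exists_pos_apply_single_of_single_le [Fintype ι] (hadd : ∀ a b, f (a + b) = f a + f b)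
    {x : κ} {a : ι →₀ ℕ} (h : single x 1 ≤ f a) : ∃ i, 0 < f (single i 1) x := by
  by_contra! hzero
  have := single_le_iff.mp h
  simp_all [apply_eq_sum_of_map_add f hadd a x]

theorem fpCharacter_map_eq [Fintype ι] [Nonempty ι] [Fintype κ] {A : NSetAlgebra ι}
    {B : NSetAlgebra κ} (hA : A.Transitive) {φA : (ι →₀ ℕ) → ℝ} {φB : (κ →₀ ℕ) → ℝ}
    (hφA : A.IsFPCharacter φA) (hφB : B.IsFPCharacter φB)
    (hadd : ∀ a b, f (a + b) = f a + f b) (hmul : ∀ a b, f (A.mul a b) = B.mul (f a) (f b))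
    (hone : f A.one = B.one) (a : ι →₀ ℕ) : φB (f a) = φA a := by
  have hψ : A.IsFPCharacter (φB ∘ f) :=
    NSetAlgebra.isFPCharacter_of_nonneg hA (by simp [hadd, hφB.map_add])
      (by simp [hmul, hφB.map_mul]) (by simp [hone, hφB.map_one])
      fun _ => nonneg_of_map_add φB hφB.map_add (fun i => (hφB.pos i).le) _
  exact congrFun (hφA.unique hA hψ).symm a

theorem linExt_eq_smul_of_isRegular [Fintype ι] [Fintype κ] [Nonempty κ] {A : NSetAlgebra ι}
    {B : NSetAlgebra κ} (hB : B.Transitive) {φA : (ι →₀ ℕ) → ℝ} {φB : (κ →₀ ℕ) → ℝ}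
    (hφA : A.IsFPCharacter φA) (hφB : B.IsFPCharacter φB)
    (hadd : ∀ a b, f (a + b) = f a + f b) (hmul : ∀ a b, f (A.mul a b) = B.mul (f a) (f b))
    (hmap : ∀ a, φB (f a) = φA a) (hdom : ∀ x : κ, ∃ a, single x 1 ≤ f a)
    {RA : ι → ℝ} {RB : κ → ℝ} (hRA : A.IsRegular φA RA) (hRB : B.IsRegular φB RB) :
    linExt f RA = ((∑ i, RA i * φA (single i 1)) / (∑ x, RB x * φB (single x 1))) • RB := by
  have hF : ∀ x, ∃ i, 0 < f (single i 1) x := fun x =>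
    have ⟨_, ha⟩ := hdom x
    exists_pos_apply_single_of_single_le hadd ha
  have hfs : ∀ x, 0 < f (∑ i, single i 1) x := fun x => by
    obtain ⟨i, hi⟩ := hF x
    rw [apply_eq_sum_of_map_add f hadd]
    exact Finset.sum_pos' (fun _ _ => Nat.zero_le _)
      ⟨i, Finset.mem_univ _, by simpa [finsetSum_apply]⟩
  have hFRA : ∀ x, 0 < (linExtMatrix f *ᵥ RA) x := fun x => by
    obtain ⟨i, hi⟩ := hF x
    exact Finset.sum_pos' (fun j _ => mul_nonneg (Nat.cast_nonneg _) (hRA.1 j).le)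
      ⟨i, Finset.mem_univ _, mul_pos (Nat.cast_pos.mpr hi) (hRA.1 i)⟩
  obtain ⟨t, ht⟩ := Matrix.exists_eq_smul_of_mulVec_eq_smul (B.mulMatrix_pos hB hfs) hFRA hRB.1
    (by rw [Matrix.mulVec_mulVec, mulMatrix_mul_linExtMatrix hadd hmul, ← Matrix.mulVec_mulVec,
      hRA.mulMatrix_mulVec hφA.map_add, Matrix.mulVec_smul])
    (hRB.mulMatrix_mulVec hφB.map_add _)
  have hpair := Matrix.dotProduct_mulVec (fun x => φB (single x 1)) (linExtMatrix f) RA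
  rw [vecMul_linExtMatrix hφB.map_add, ht, dotProduct_smul] at hpair
  have hden : 0 < ∑ x, RB x * φB (single x 1) :=
    Finset.sum_pos (fun x _ => mul_pos (hRB.1 x) (hφB.pos x)) Finset.univ_nonempty
  rw [linExt_eq_mulVec, ht]
  congr 1
  rw [eq_div_iff hden.ne']
  simpa [dotProduct, hmap, mul_comm] using hpair

end Morphism

open NSetAlgebra in
/-- A morphism of transitive ℕSet algebras preserves FP dimensions, and if it is
dominant it sends the regular element of `A` to
`(FPdim(R_A)/FPdim(R_B)) • R_B`. -/
theorem stmt14 {ι κ : Type*} [Fintype ι] [Nonempty ι] [Fintype κ] [Nonempty κ]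
    (A : NSetAlgebra ι) (B : NSetAlgebra κ) (hA : A.Transitive) (hB : B.Transitive)
    (φA : (ι →₀ ℕ) → ℝ) (φB : (κ →₀ ℕ) → ℝ)
    (hφA : A.IsFPCharacter φA) (hφB : B.IsFPCharacter φB)
    (f : (ι →₀ ℕ) → (κ →₀ ℕ))
    (hadd : ∀ a b, f (a + b) = f a + f b)
    (hmul : ∀ a b, f (A.mul a b) = B.mul (f a) (f b))
    (hone : f A.one = B.one) :
    (∀ a, φB (f a) = φA a) ∧
    ((∀ x : κ, ∃ a, Finsupp.single x 1 ≤ f a) →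
      ∀ RA RB, A.IsRegular φA RA → B.IsRegular φB RB →
        linExt f RA =
          ((∑ i : ι, RA i * φA (Finsupp.single i 1)) /
            (∑ x : κ, RB x * φB (Finsupp.single x 1))) • RB) := by
  have hmap := fpCharacter_map_eq hA hφA hφB hadd hmul hone
  exact ⟨hmap, fun hdom _ _ hRA hRB =>
    linExt_eq_smul_of_isRegular hB hφA hφB hadd hmul hmap hdom hRA hRB⟩
end
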